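/- Let d ≥ 1 and s ≥ 1 be integers, let L = (l_0, …, l_{s+1}) be any sequence of quantization levels, and set τ_j = l_{j+1} − l_j for j = 0, …, s. For every nonzero v ∈ ℝ^d, E[‖Q_s(v) − v‖²] ≤ ε_LP · ‖v‖², where ε_LP is the supremum of Σ_{j=0}^s τ_j² x_j / 4 over all x = (x_0, …, x_s) ∈ ℝ^{s+1} satisfying x_j ≥ 0 for all j, Σ_{j=0}^s x_j ≤ d, and d − Σ_{k=0}^j x_k ≤ (1/l_{j+1})² for j = 0, …, s−1. -/

import Mathlib

/-!
Coordinatewise, `Q_s(v)ᵢ` is a two-point random variable with mean `vᵢ`, taking the values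
`‖v‖ sign(vᵢ) l_{ℓ(rᵢ)}` and `‖v‖ sign(vᵢ) l_{ℓ(rᵢ)+1}`; its variance is therefore at most
`‖v‖² τ(rᵢ)² / 4`. Summing over `i` gives `E‖Q_s(v) − v‖² ≤ ‖v‖² Σⱼ τⱼ² xⱼ / 4`, where `xⱼ` is the
number of coordinates whose bin is `j`. These counts are feasible for the linear program: they
sum to `d`, and since `Σᵢ rᵢ² = 1`, at most `1 / l_{j+1}²` coordinates have `rᵢ ≥ l_{j+1}`.
-/

open MeasureTheory Real

noncomputable section

/-- The index of the quantization bin containing the normalized coordinate `r`. -/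
def levIdx (l : ℕ → ℝ) (s : ℕ) (r : ℝ) : ℕ := sSup {j | j ≤ s ∧ l j ≤ r}

/-- The probability of rounding the normalized coordinate `r` up to the next level. -/
def quantP (l : ℕ → ℝ) (s : ℕ) (r : ℝ) : ℝ :=
  (r - l (levIdx l s r)) / (l (levIdx l s r + 1) - l (levIdx l s r))

/-- The (random) nonuniform quantization of `v`, driven by the uniform noise vector `u`:
coordinate `i` is `‖v‖ · sign vᵢ · hᵢ`, where `hᵢ` is the upper adjacent level with
probability `p(rᵢ)` and the lower adjacent level otherwise. -/
def quant (l : ℕ → ℝ) (s : ℕ) {d : ℕ} (v : EuclideanSpace ℝ (Fin d))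
    (u : Fin d → ℝ) : EuclideanSpace ℝ (Fin d) :=
  WithLp.toLp 2 fun i =>
    ‖v‖ * Real.sign (v i) *
      (if u i ≤ quantP l s (|v i| / ‖v‖)
       then l (levIdx l s (|v i| / ‖v‖) + 1)
       else l (levIdx l s (|v i| / ‖v‖)))

/-- The uniform probability measure on the cube `[0,1]^d`, driving the quantization noise. -/
def unifCube (d : ℕ) : Measure (Fin d → ℝ) :=
  Measure.pi fun _ => volume.restrict (Set.Icc (0:ℝ) 1)

/-- `l` is a valid sequence of quantization levels `l 0 = 0 < l 1 < ⋯ < l (s+1) = 1`. -/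
def IsLevels (l : ℕ → ℝ) (s : ℕ) : Prop :=
  l 0 = 0 ∧ l (s+1) = 1 ∧ ∀ j ≤ s, l j < l (j+1)

/-- The exponentially spaced NUQSGD levels `(0, 2^{-s}, 2^{1-s}, …, 2^{-1}, 1)`:
`l 0 = 0` and `l j = 2^{j-1-s}` for `j = 1, …, s+1`. -/
def nuqLevels (s : ℕ) : ℕ → ℝ :=
  fun j => if j = 0 then 0 else 2 ^ ((j : ℤ) - 1 - (s : ℤ))

open Finset

lemma levIdx_le (l : ℕ → ℝ) (s : ℕ) (r : ℝ) : levIdx l s r ≤ s :=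
  csSup_le' fun _ hj => hj.1

/-- The bin width `τ(r)`. -/
def binWidth (l : ℕ → ℝ) (s : ℕ) (r : ℝ) : ℝ :=
  l (levIdx l s r + 1) - l (levIdx l s r)

namespace IsLevels

variable {l : ℕ → ℝ} {s : ℕ}

lemma monotoneOn (hl : IsLevels l s) : MonotoneOn l (Set.Iic (s + 1)) :=
  monotoneOn_of_le_add_one Set.ordConnected_Iic fun j _ _ hj =>
    (hl.2.2 j (Nat.le_of_succ_le_succ hj)).le

lemma nonneg (hl : IsLevels l s) {j : ℕ} (hj : j ≤ s + 1) : 0 ≤ l j :=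
  hl.1 ▸ hl.monotoneOn (Nat.zero_le _) hj (Nat.zero_le j)

lemma le_one (hl : IsLevels l s) {j : ℕ} (hj : j ≤ s + 1) : l j ≤ 1 :=
  hl.2.1 ▸ hl.monotoneOn hj (Set.mem_Iic.mpr le_rfl) hj

lemma pos_succ (hl : IsLevels l s) {j : ℕ} (hj : j ≤ s) : 0 < l (j + 1) :=
  (hl.nonneg (by omega)).trans_lt (hl.2.2 j hj)

lemma sub_sq_le_one (hl : IsLevels l s) {j : ℕ} (hj : j ≤ s) : (l (j + 1) - l j) ^ 2 ≤ 1 := by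
  have h0 := hl.nonneg (j := j) (by omega)
  have h1 := hl.le_one (j := j + 1) (by omega)
  have hlt := hl.2.2 j hj
  nlinarith

lemma binWidth_pos (hl : IsLevels l s) (r : ℝ) : 0 < binWidth l s r :=
  sub_pos.mpr (hl.2.2 _ (levIdx_le l s r))

lemma level_levIdx_le (hl : IsLevels l s) {r : ℝ} (hr : 0 ≤ r) : l (levIdx l s r) ≤ r :=
  (Nat.sSup_mem (s := {j | j ≤ s ∧ l j ≤ r}) ⟨0, Nat.zero_le s, hl.1 ▸ hr⟩
    ⟨s, fun _ hj => hj.1⟩).2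

lemma le_level_levIdx_succ (hl : IsLevels l s) {r : ℝ} (hr : r ≤ 1) :
    r ≤ l (levIdx l s r + 1) := by
  by_contra! hlt
  rcases (levIdx_le l s r).lt_or_eq with hs | hs
  · have : levIdx l s r + 1 ≤ levIdx l s r := le_csSup ⟨s, fun _ hj => hj.1⟩ ⟨hs, hlt.le⟩
    omega
  · rw [hs, hl.2.1] at hlt
    linarith

lemma quantP_nonneg (hl : IsLevels l s) {r : ℝ} (hr : 0 ≤ r) : 0 ≤ quantP l s r :=
  div_nonneg (sub_nonneg.mpr (hl.level_levIdx_le hr)) (hl.binWidth_pos r).le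

lemma quantP_le_one (hl : IsLevels l s) {r : ℝ} (hr : r ≤ 1) : quantP l s r ≤ 1 :=
  div_le_one_of_le₀ (sub_le_sub_right (hl.le_level_levIdx_succ hr) _) (hl.binWidth_pos r).le

lemma sub_level_levIdx (hl : IsLevels l s) (r : ℝ) :
    r - l (levIdx l s r) = quantP l s r * binWidth l s r :=
  (div_mul_cancel₀ _ (hl.binWidth_pos r).ne').symm

end IsLevels

instance : IsProbabilityMeasure (volume.restrict (Set.Icc (0 : ℝ) 1)) :=
  ⟨by simp⟩

instance (d : ℕ) : IsProbabilityMeasure (unifCube d) := by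
  unfold unifCube; infer_instance

lemma unifCube_map_eval {d : ℕ} (i : Fin d) :
    (unifCube d).map (Function.eval i) = volume.restrict (Set.Icc 0 1) := by
  simp [unifCube, Measure.pi_map_eval]

lemma ite_le_eq_indicator_add (p C D : ℝ) :
    (fun t : ℝ => if t ≤ p then C else D) =
      fun t => (Set.Iic p).indicator (fun _ => C - D) t + D := by
  ext t
  by_cases h : t ≤ p <;> simp [h]

lemma integrable_ite_le (μ : Measure ℝ) [IsFiniteMeasure μ] (p C D : ℝ) :
    Integrable (fun t => if t ≤ p then C else D) μ := by
  rw [ite_le_eq_indicator_add]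
  exact ((integrable_const _).indicator measurableSet_Iic).add (integrable_const D)

lemma setIntegral_Icc_ite_le {p : ℝ} (hp0 : 0 ≤ p) (hp1 : p ≤ 1) (C D : ℝ) :
    ∫ t in Set.Icc 0 1, (if t ≤ p then C else D) = p * C + (1 - p) * D := by
  have hmeas : volume.real (Set.Iic p ∩ Set.Icc 0 1) = p := by
    rw [← Set.Ici_inter_Iic, Set.inter_left_comm, Set.Iic_inter_Iic, min_eq_left hp1,
      Set.Ici_inter_Iic, Real.volume_real_Icc_of_le hp0, sub_zero]
  rw [ite_le_eq_indicator_add,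
    integral_add ((integrable_const _).indicator measurableSet_Iic) (integrable_const D),
    integral_indicator_const _ measurableSet_Iic, measureReal_restrict_apply measurableSet_Iic,
    hmeas, integral_const, probReal_univ, smul_eq_mul, smul_eq_mul]
  ring

lemma integral_unifCube_ite_eval_le {d : ℕ} (i : Fin d) {p : ℝ} (hp0 : 0 ≤ p) (hp1 : p ≤ 1)
    (C D : ℝ) :
    ∫ u, (if u i ≤ p then C else D) ∂(unifCube d) = p * C + (1 - p) * D := by
  rw [← setIntegral_Icc_ite_le hp0 hp1, ← unifCube_map_eval i,
    integral_map (measurable_pi_apply i).aemeasurable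
      (integrable_ite_le _ p C D).aestronglyMeasurable]

lemma integrable_unifCube_ite_eval_le {d : ℕ} (i : Fin d) (p C D : ℝ) :
    Integrable (fun u => if u i ≤ p then C else D) (unifCube d) :=
  (integrable_map_measure (integrable_ite_le _ p C D).aestronglyMeasurable
    (measurable_pi_apply i).aemeasurable).mp (integrable_ite_le _ p C D)

lemma Real.sign_mul_abs (a : ℝ) : Real.sign a * |a| = a := by
  rcases lt_trichotomy a 0 with h | rfl | h
  · rw [Real.sign_of_neg h, abs_of_neg h]; ring
  · simp
  · rw [Real.sign_of_pos h, abs_of_pos h, one_mul]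

lemma Real.sign_sq_le_one (a : ℝ) : Real.sign a ^ 2 ≤ 1 := by
  rcases Real.sign_apply_eq a with h | h | h <;> rw [h] <;> norm_num

lemma two_point_variance_le {p A B r : ℝ} (hr : r - B = p * (A - B)) :
    p * (A - r) ^ 2 + (1 - p) * (B - r) ^ 2 ≤ (A - B) ^ 2 / 4 := by
  have hA : A - r = (1 - p) * (A - B) := by linarith
  have hB : B - r = -(p * (A - B)) := by linarith
  rw [hA, hB]
  nlinarith [sq_nonneg ((A - B) * (1 - 2 * p))]

section Coordinates

variable {d : ℕ} (v : EuclideanSpace ℝ (Fin d))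

lemma abs_apply_div_norm_le_one (i : Fin d) : |v i| / ‖v‖ ≤ 1 :=
  div_le_one_of_le₀ (PiLp.norm_apply_le v i) (norm_nonneg v)

lemma sum_sq_abs_apply_div_norm_le_one : ∑ i, (|v i| / ‖v‖) ^ 2 ≤ 1 := by
  simp_rw [div_pow, sq_abs, ← sum_div, ← EuclideanSpace.real_norm_sq_eq]
  exact div_self_le_one _

lemma norm_mul_sign_mul_abs_div_norm (i : Fin d) :
    ‖v‖ * Real.sign (v i) * (|v i| / ‖v‖) = v i := by
  rcases eq_or_ne (v i) 0 with h | h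
  · simp [h]
  · have hN : ‖v‖ ≠ 0 := ((abs_pos.mpr h).trans_le (PiLp.norm_apply_le v i)).ne'
    rw [mul_comm ‖v‖, mul_assoc, mul_div_cancel₀ _ hN, Real.sign_mul_abs]

variable {l : ℕ → ℝ} {s : ℕ}

lemma sq_quant_apply_sub (u : Fin d → ℝ) (i : Fin d) :
    (quant l s v u i - v i) ^ 2 = if u i ≤ quantP l s (|v i| / ‖v‖)
      then (‖v‖ * Real.sign (v i)) ^ 2 * (l (levIdx l s (|v i| / ‖v‖) + 1) - |v i| / ‖v‖) ^ 2
      else (‖v‖ * Real.sign (v i)) ^ 2 * (l (levIdx l s (|v i| / ‖v‖)) - |v i| / ‖v‖) ^ 2 := by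
  set r := |v i| / ‖v‖
  have hvi : v i = ‖v‖ * Real.sign (v i) * r := (norm_mul_sign_mul_abs_div_norm v i).symm
  have hq : quant l s v u i = ‖v‖ * Real.sign (v i) *
      (if u i ≤ quantP l s r then l (levIdx l s r + 1) else l (levIdx l s r)) := rfl
  rw [hq]
  split_ifs <;> nth_rewrite 2 [hvi] <;> ring

lemma integral_sq_quant_apply_sub_le (hl : IsLevels l s) (i : Fin d) :
    ∫ u, (quant l s v u i - v i) ^ 2 ∂(unifCube d) ≤
      ‖v‖ ^ 2 * binWidth l s (|v i| / ‖v‖) ^ 2 / 4 := by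
  set r := |v i| / ‖v‖
  have hr0 : 0 ≤ r := div_nonneg (abs_nonneg _) (norm_nonneg v)
  have hσ : (‖v‖ * Real.sign (v i)) ^ 2 ≤ ‖v‖ ^ 2 := by
    rw [mul_pow]
    exact mul_le_of_le_one_right (sq_nonneg _) (Real.sign_sq_le_one _)
  simp_rw [sq_quant_apply_sub]
  rw [integral_unifCube_ite_eval_le i (hl.quantP_nonneg hr0)
    (hl.quantP_le_one (abs_apply_div_norm_le_one v i))]
  calc _ = (‖v‖ * Real.sign (v i)) ^ 2 * (quantP l s r * (l (levIdx l s r + 1) - r) ^ 2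
        + (1 - quantP l s r) * (l (levIdx l s r) - r) ^ 2) := by ring
    _ ≤ ‖v‖ ^ 2 * (binWidth l s r ^ 2 / 4) :=
        mul_le_mul_of_nonneg hσ (two_point_variance_le (hl.sub_level_levIdx r)) (sq_nonneg _)
          (by positivity)
    _ = _ := by ring

lemma integral_norm_quant_sub_sq_le (hl : IsLevels l s) :
    ∫ u, ‖quant l s v u - v‖ ^ 2 ∂(unifCube d) ≤
      (∑ i, binWidth l s (|v i| / ‖v‖) ^ 2 / 4) * ‖v‖ ^ 2 := by
  conv_lhs => simp only [EuclideanSpace.real_norm_sq_eq, PiLp.sub_apply]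
  rw [integral_finsetSum _ fun i _ => by
    simp_rw [sq_quant_apply_sub]; exact integrable_unifCube_ite_eval_le i _ _ _, sum_mul]
  refine sum_le_sum fun i _ => (integral_sq_quant_apply_sub_le v hl i).trans_eq ?_
  ring

end Coordinates

/-- `ε_LP = sSup (lpValues d s l)`. -/
def lpValues (d s : ℕ) (l : ℕ → ℝ) : Set ℝ :=
  {y : ℝ | ∃ x : ℕ → ℝ,
    (∀ j ≤ s, 0 ≤ x j) ∧
    (∑ j ∈ Finset.range (s + 1), x j ≤ (d:ℝ)) ∧
    (∀ j < s, (d:ℝ) - ∑ k ∈ Finset.range (j + 1), x k ≤ (1 / l (j + 1)) ^ 2) ∧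
    y = ∑ j ∈ Finset.range (s + 1), (l (j + 1) - l j) ^ 2 * x j / 4}

section LinearProgram

variable {l : ℕ → ℝ} {s : ℕ}

lemma bddAbove_lpValues (hl : IsLevels l s) (d : ℕ) : BddAbove (lpValues d s l) := by
  refine ⟨d / 4, ?_⟩
  rintro _ ⟨x, hx0, hxd, -, rfl⟩
  calc ∑ j ∈ range (s + 1), (l (j + 1) - l j) ^ 2 * x j / 4
      ≤ ∑ j ∈ range (s + 1), x j / 4 := by
        refine sum_le_sum fun j hj => ?_
        have hjs : j ≤ s := Nat.lt_succ_iff.mp (mem_range.mp hj)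
        gcongr
        exact mul_le_of_le_one_left (hx0 j hjs) (hl.sub_sq_le_one hjs)
    _ ≤ d / 4 := by rw [← sum_div]; gcongr

variable {ι : Type*} [Fintype ι]

lemma card_lt_levIdx_mul_sq_le (hl : IsLevels l s) {r : ι → ℝ} (hr : ∀ i, 0 ≤ r i) (j : ℕ) :
    (#{i | j < levIdx l s (r i)} : ℝ) * l (j + 1) ^ 2 ≤ ∑ i, r i ^ 2 := by
  rw [← nsmul_eq_mul]
  refine (card_nsmul_le_sum _ _ _ fun i hi => ?_).trans
    (sum_le_univ_sum_of_nonneg fun i => sq_nonneg _)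
  have hji : j < levIdx l s (r i) := (mem_filter.mp hi).2
  have hJ := levIdx_le l s (r i)
  have hle : l (j + 1) ≤ r i :=
    (hl.monotoneOn (Set.mem_Iic.mpr (by omega)) (Set.mem_Iic.mpr (by omega)) hji).trans
      (hl.level_levIdx_le (hr i))
  exact pow_le_pow_left₀ (hl.nonneg (by omega)) hle 2

lemma sum_sq_binWidth_div_four_mem_lpValues (hl : IsLevels l s) {r : ι → ℝ}
    (hr0 : ∀ i, 0 ≤ r i) (hr : ∑ i, r i ^ 2 ≤ 1) :
    ∑ i, binWidth l s (r i) ^ 2 / 4 ∈ lpValues (Fintype.card ι) s l := by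
  set J := fun i => levIdx l s (r i)
  have hpartial : ∀ j, ∑ k ∈ range (j + 1), (#{i | J i = k} : ℝ) = #{i | J i ≤ j} := by
    intro j
    rw [← Nat.cast_sum, sum_card_fiberwise_eq_card_filter]
    simp only [mem_range, Nat.lt_succ_iff]
  -- the feasible point: `xⱼ` counts the coordinates in bin `j`
  refine ⟨fun j => #{i | J i = j}, fun j _ => Nat.cast_nonneg _, ?_, fun j hj => ?_, ?_⟩
  · rw [hpartial]
    exact_mod_cast card_le_univ _
  · have hcompl : (Fintype.card ι : ℝ) - #{i | J i ≤ j} = #{i | j < J i} := by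
      rw [← card_univ, ← card_filter_add_card_filter_not (s := univ) (fun i => J i ≤ j)]
      push_cast
      simp only [not_le, add_sub_cancel_left]
    have hpos := hl.pos_succ hj.le
    rw [hpartial, hcompl, one_div_pow, le_div_iff₀ (by positivity)]
    exact (card_lt_levIdx_mul_sq_le hl hr0 j).trans hr
  · rw [← sum_fiberwise_of_maps_to (g := J) (t := range (s + 1))
      fun i _ => mem_range.mpr (Nat.lt_succ_of_le (levIdx_le l s (r i)))]
    refine sum_congr rfl fun j _ => ?_
    have hfiber : ∀ i ∈ ({i | J i = j} : Finset ι),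
        binWidth l s (r i) ^ 2 / 4 = (l (j + 1) - l j) ^ 2 / 4 := fun i hi => by
      have hJi : levIdx l s (r i) = j := (mem_filter.mp hi).2
      rw [binWidth, hJi]
    rw [sum_congr rfl hfiber, sum_const, nsmul_eq_mul]
    ring

end LinearProgram

theorem nuq_variance_LP_bound_general (d s : ℕ)
    (l : ℕ → ℝ) (hl : IsLevels l s)
    (v : EuclideanSpace ℝ (Fin d)) :
    (∫ u, ‖quant l s v u - v‖ ^ 2 ∂(unifCube d)) ≤
      sSup {y : ℝ | ∃ x : ℕ → ℝ,
        (∀ j ≤ s, 0 ≤ x j) ∧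
        (∑ j ∈ Finset.range (s + 1), x j ≤ (d:ℝ)) ∧
        (∀ j < s, (d:ℝ) - ∑ k ∈ Finset.range (j + 1), x k ≤ (1 / l (j + 1)) ^ 2) ∧
        y = ∑ j ∈ Finset.range (s + 1), (l (j + 1) - l j) ^ 2 * x j / 4} * ‖v‖ ^ 2 := by
  have hfeasible : ∑ i, binWidth l s (|v i| / ‖v‖) ^ 2 / 4 ∈ lpValues d s l := by
    simpa only [Fintype.card_fin] using sum_sq_binWidth_div_four_mem_lpValues hl
      (fun i => by positivity) (sum_sq_abs_apply_div_norm_le_one v)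
  exact (integral_norm_quant_sub_sq_le v hl).trans
    (mul_le_mul_of_nonneg_right (le_csSup (bddAbove_lpValues hl d) hfeasible) (sq_nonneg _))

/-- **Theorem 6 (LP bound)**: for any levels `L`, with `τⱼ = l_{j+1} − lⱼ`,
`E[‖Q_s(v) − v‖²] ≤ ε_LP ‖v‖²`, where `ε_LP` is the optimal value of the linear program
`max Σⱼ τⱼ² xⱼ/4` subject to `xⱼ ≥ 0`, `Σⱼ xⱼ ≤ d`, and
`d − Σ_{k=0}^{j} x_k ≤ (1/l_{j+1})²` for `j = 0, …, s−1`. -/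
theorem nuq_variance_LP_bound (d s : ℕ) (hd : 1 ≤ d) (hs : 1 ≤ s)
    (l : ℕ → ℝ) (hl : IsLevels l s)
    (v : EuclideanSpace ℝ (Fin d)) (hv : v ≠ 0) :
    (∫ u, ‖quant l s v u - v‖ ^ 2 ∂(unifCube d)) ≤
      sSup {y : ℝ | ∃ x : ℕ → ℝ,
        (∀ j ≤ s, 0 ≤ x j) ∧
        (∑ j ∈ Finset.range (s + 1), x j ≤ (d:ℝ)) ∧
        (∀ j < s, (d:ℝ) - ∑ k ∈ Finset.range (j + 1), x k ≤ (1 / l (j + 1)) ^ 2) ∧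
        y = ∑ j ∈ Finset.range (s + 1), (l (j + 1) - l j) ^ 2 * x j / 4} * ‖v‖ ^ 2 :=
  nuq_variance_LP_bound_general d s l hl v
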